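/- arXiv:1904.00943 — 4 statements merged into one kernel-verified Lean document; each statement's English description precedes it below -/
import Mathlib

section
/- Fix c ∈ [q] and families of subsets S₁(w), S₂(w) ⊆ [q] for w ∈ W satisfying: S₂(u) ⊊ S₁(u) with |S₁(u)| − |S₂(u)| = 1; S₂(w) is nonempty for every w ∈ W; and S₂(w) = S₁(w) for every w ∈ W with w ≠ u. Let 𝒞₁ = ∏_{w∈W} S₁(w) and 𝒞₂ = ∏_{w∈W} S₂(w) be the corresponding product sets of configurations in [q]^W. Then ∑_{c'∈[q]} ν(c') · ( min_{τ∈𝒞₂} f_{c,c'}(τ) − min_{τ∈𝒞₁} f_{c,c'}(τ) + max_{τ∈𝒞₁} f_{c,c'}(τ) − max_{τ∈𝒞₂} f_{c,c'}(τ) ) ≤ 2 · max_{a,b,c''∈[q]} ∑_{c'∈[q]} ν(c') · δ_{u,a,b} f_{c'',c'}. -/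
open Finset

/-- `delta f u a b` is the maximum of `|f σ - f τ|` over all pairs `σ, τ : W → Fin q`
with `σ u = a`, `τ u = b`, and `σ w = τ w` for all `w ≠ u`. -/
noncomputable def delta {q : ℕ} {W : Type*} (f : (W → Fin q) → ℝ) (u : W) (a b : Fin q) : ℝ :=
  sSup {x : ℝ | ∃ σ τ : W → Fin q,
    σ u = a ∧ τ u = b ∧ (∀ w, w ≠ u → σ w = τ w) ∧ x = |f σ - f τ|}

/-- `minOver C g` is the minimum of `g` over the (finite nonempty) set `C`. -/
noncomputable def minOver {q : ℕ} {W : Type*} (C : Set (W → Fin q))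
    (g : (W → Fin q) → ℝ) : ℝ := sInf (g '' C)

/-- `maxOver C g` is the maximum of `g` over the (finite nonempty) set `C`. -/
noncomputable def maxOver {q : ℕ} {W : Type*} (C : Set (W → Fin q))
    (g : (W → Fin q) → ℝ) : ℝ := sSup (g '' C)

/-- **Bound on the optimization problem `𝔓(v,u)`** (Lemma 16 of the paper).
For subsets `S₁(w), S₂(w) ⊆ [q]` with `S₂(u) ⊊ S₁(u)`, `|S₁(u)| = |S₂(u)| + 1`,
`S₂(w)` nonempty for all `w`, and `S₂(w) = S₁(w)` for `w ≠ u`, the objective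
`∑_{c'} ν(c') (min_{𝒞₂} f_{c,c'} − min_{𝒞₁} f_{c,c'} + max_{𝒞₁} f_{c,c'} − max_{𝒞₂} f_{c,c'})`
is at most `2 max_{a,b,c''} ∑_{c'} ν(c') δ_{u,a,b} f_{c'',c'}`. -/
theorem opt_problem_bound (q : ℕ) (hq : 1 ≤ q) (W : Type*) [Fintype W] [Nonempty W] (u : W)
    (ν : Fin q → ℝ) (hν0 : ∀ c', 0 ≤ ν c') (hν1 : ∑ c', ν c' = 1)
    (f : Fin q → Fin q → (W → Fin q) → ℝ)
    (hf : ∀ c c' τ, f c c' τ ∈ Set.Icc (0 : ℝ) 1)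
    (c : Fin q) (S₁ S₂ : W → Finset (Fin q))
    (hsub : S₂ u ⊂ S₁ u) (hcard : (S₁ u).card = (S₂ u).card + 1)
    (hne : ∀ w, (S₂ w).Nonempty)
    (heq : ∀ w, w ≠ u → S₂ w = S₁ w) :
    ∑ c', ν c' *
        (minOver {τ : W → Fin q | ∀ w, τ w ∈ S₂ w} (f c c')
          - minOver {τ : W → Fin q | ∀ w, τ w ∈ S₁ w} (f c c')
          + maxOver {τ : W → Fin q | ∀ w, τ w ∈ S₁ w} (f c c')
          - maxOver {τ : W → Fin q | ∀ w, τ w ∈ S₂ w} (f c c'))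
      ≤ 2 * sSup {y : ℝ | ∃ a b c'' : Fin q,
          y = ∑ c', ν c' * delta (f c'' c') u a b} := by
  classical
  set C₁ : Set (W → Fin q) := {τ : W → Fin q | ∀ w, τ w ∈ S₁ w} with hC₁def
  set C₂ : Set (W → Fin q) := {τ : W → Fin q | ∀ w, τ w ∈ S₂ w} with hC₂def
  obtain ⟨b, hb⟩ := hne u
  have hdiffcard : (S₁ u \ S₂ u).card = 1 := by
    rw [Finset.card_sdiff_of_subset hsub.subset]; omega
  obtain ⟨a, ha⟩ := Finset.card_eq_one.mp hdiffcard
  have hamem : a ∈ S₁ u \ S₂ u := ha ▸ Finset.mem_singleton_self a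
  have haS1 : a ∈ S₁ u := (Finset.mem_sdiff.mp hamem).1
  have hC₂ne : C₂.Nonempty := ⟨fun w => (hne w).choose, fun w => (hne w).choose_spec⟩
  have hC21 : C₂ ⊆ C₁ := by
    intro τ hτ w
    by_cases hw : w = u
    · rw [hw]; exact hsub.subset (hτ u)
    · rw [← heq w hw]; exact hτ w
  have hC₁ne : C₁.Nonempty := hC₂ne.mono hC21
  -- delta facts
  have delta_bdd : ∀ (g : (W → Fin q) → ℝ) (a' b' : Fin q),
      BddAbove {x : ℝ | ∃ σ τ : W → Fin q,
        σ u = a' ∧ τ u = b' ∧ (∀ w, w ≠ u → σ w = τ w) ∧ x = |g σ - g τ|} := by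
    intro g a' b'
    apply Set.Finite.bddAbove
    apply Set.Finite.subset
      (Set.finite_range (fun p : (W → Fin q) × (W → Fin q) => |g p.1 - g p.2|))
    rintro x ⟨σ, τ, -, -, -, rfl⟩
    exact ⟨(σ, τ), rfl⟩
  have delta_le : ∀ (g : (W → Fin q) → ℝ) (a' b' : Fin q) (σ τ : W → Fin q),
      σ u = a' → τ u = b' → (∀ w, w ≠ u → σ w = τ w) →
      |g σ - g τ| ≤ delta g u a' b' := by
    intro g a' b' σ τ h1 h2 h3
    exact le_csSup (delta_bdd g a' b') ⟨σ, τ, h1, h2, h3, rfl⟩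
  have delta_nonneg : ∀ (g : (W → Fin q) → ℝ) (a' b' : Fin q), 0 ≤ delta g u a' b' := by
    intro g a' b'
    have h := delta_le g a' b' (Function.update (fun _ => a') u a')
      (Function.update (fun _ => a') u b') (by simp) (by simp)
      (fun w hw => by simp [Function.update_of_ne hw])
    exact le_trans (abs_nonneg _) h
  -- min/max facts
  have minOver_le : ∀ (C : Set (W → Fin q)) (g : (W → Fin q) → ℝ) (σ : W → Fin q),
      σ ∈ C → minOver C g ≤ g σ := by
    intro C g σ hσ
    exact csInf_le (Set.Finite.bddBelow (Set.toFinite _)) ⟨σ, hσ, rfl⟩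
  have le_maxOver : ∀ (C : Set (W → Fin q)) (g : (W → Fin q) → ℝ) (σ : W → Fin q),
      σ ∈ C → g σ ≤ maxOver C g := by
    intro C g σ hσ
    exact le_csSup (Set.Finite.bddAbove (Set.toFinite _)) ⟨σ, hσ, rfl⟩
  have minOver_mem : ∀ (C : Set (W → Fin q)) (g : (W → Fin q) → ℝ),
      C.Nonempty → ∃ σ ∈ C, minOver C g = g σ := by
    intro C g hC
    obtain ⟨σ, hσ, h⟩ := (hC.image g).csInf_mem (Set.toFinite _)
    exact ⟨σ, hσ, h.symm⟩
  have maxOver_mem : ∀ (C : Set (W → Fin q)) (g : (W → Fin q) → ℝ),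
      C.Nonempty → ∃ σ ∈ C, maxOver C g = g σ := by
    intro C g hC
    obtain ⟨σ, hσ, h⟩ := (hC.image g).csSup_mem (Set.toFinite _)
    exact ⟨σ, hσ, h.symm⟩
  -- key per-c' bounds
  have key_min : ∀ c', minOver C₂ (f c c') - minOver C₁ (f c c') ≤ delta (f c c') u b a := by
    intro c'
    obtain ⟨σ₁, hσ₁, hmin⟩ := minOver_mem C₁ (f c c') hC₁ne
    by_cases h : σ₁ u ∈ S₂ u
    · have hmem : σ₁ ∈ C₂ := by
        intro w
        by_cases hw : w = u
        · rw [hw]; exact h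
        · rw [heq w hw]; exact hσ₁ w
      have h2 := minOver_le C₂ (f c c') σ₁ hmem
      linarith [delta_nonneg (f c c') b a]
    · have hσu : σ₁ u = a := by
        have hm : σ₁ u ∈ S₁ u \ S₂ u := Finset.mem_sdiff.mpr ⟨hσ₁ u, h⟩
        rw [ha] at hm; exact Finset.mem_singleton.mp hm
      set σ₂ := Function.update σ₁ u b with hσ₂def
      have hσ₂ : σ₂ ∈ C₂ := by
        intro w
        by_cases hw : w = u
        · rw [hw]; simpa [σ₂] using hb
        · rw [heq w hw]
          simpa [σ₂, Function.update_of_ne hw] using hσ₁ w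
      have h1 := minOver_le C₂ (f c c') σ₂ hσ₂
      have h2 := delta_le (f c c') b a σ₂ σ₁ (by simp [σ₂]) hσu
        (fun w hw => by simp [σ₂, Function.update_of_ne hw])
      have h3 : f c c' σ₂ - f c c' σ₁ ≤ |f c c' σ₂ - f c c' σ₁| := le_abs_self _
      linarith
  have key_max : ∀ c', maxOver C₁ (f c c') - maxOver C₂ (f c c') ≤ delta (f c c') u a b := by
    intro c'
    obtain ⟨σ₁, hσ₁, hmax⟩ := maxOver_mem C₁ (f c c') hC₁ne
    by_cases h : σ₁ u ∈ S₂ u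
    · have hmem : σ₁ ∈ C₂ := by
        intro w
        by_cases hw : w = u
        · rw [hw]; exact h
        · rw [heq w hw]; exact hσ₁ w
      have h2 := le_maxOver C₂ (f c c') σ₁ hmem
      linarith [delta_nonneg (f c c') a b]
    · have hσu : σ₁ u = a := by
        have hm : σ₁ u ∈ S₁ u \ S₂ u := Finset.mem_sdiff.mpr ⟨hσ₁ u, h⟩
        rw [ha] at hm; exact Finset.mem_singleton.mp hm
      set σ₂ := Function.update σ₁ u b with hσ₂def
      have hσ₂ : σ₂ ∈ C₂ := by
        intro w
        by_cases hw : w = u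
        · rw [hw]; simpa [σ₂] using hb
        · rw [heq w hw]
          simpa [σ₂, Function.update_of_ne hw] using hσ₁ w
      have h1 := le_maxOver C₂ (f c c') σ₂ hσ₂
      have h2 := delta_le (f c c') a b σ₁ σ₂ hσu (by simp [σ₂])
        (fun w hw => by simp [σ₂, Function.update_of_ne hw])
      have h3 : f c c' σ₁ - f c c' σ₂ ≤ |f c c' σ₁ - f c c' σ₂| := le_abs_self _
      linarith
  -- the RHS sup
  set Y : Set ℝ := {y : ℝ | ∃ a b c'' : Fin q, y = ∑ c', ν c' * delta (f c'' c') u a b} with hYdef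
  have hYbdd : BddAbove Y := by
    apply Set.Finite.bddAbove
    apply Set.Finite.subset
      (Set.finite_range (fun p : Fin q × Fin q × Fin q =>
        ∑ c', ν c' * delta (f p.2.2 c') u p.1 p.2.1))
    rintro y ⟨a', b', c'', rfl⟩
    exact ⟨(a', b', c''), rfl⟩
  have hY1 : (∑ c', ν c' * delta (f c c') u b a) ∈ Y := ⟨b, a, c, rfl⟩
  have hY2 : (∑ c', ν c' * delta (f c c') u a b) ∈ Y := ⟨a, b, c, rfl⟩
  calc ∑ c', ν c' * (minOver C₂ (f c c') - minOver C₁ (f c c')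
          + maxOver C₁ (f c c') - maxOver C₂ (f c c'))
      = (∑ c', ν c' * (minOver C₂ (f c c') - minOver C₁ (f c c')))
        + ∑ c', ν c' * (maxOver C₁ (f c c') - maxOver C₂ (f c c')) := by
        rw [← Finset.sum_add_distrib]
        exact Finset.sum_congr rfl fun c' _ => by ring
    _ ≤ (∑ c', ν c' * delta (f c c') u b a) + ∑ c', ν c' * delta (f c c') u a b := by
        apply add_le_add
        · exact Finset.sum_le_sum fun c' _ =>
            mul_le_mul_of_nonneg_left (key_min c') (hν0 c')
        · exact Finset.sum_le_sum fun c' _ =>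
            mul_le_mul_of_nonneg_left (key_max c') (hν0 c')
    _ ≤ sSup Y + sSup Y := add_le_add (le_csSup hYbdd hY1) (le_csSup hYbdd hY2)
    _ = 2 * sSup Y := by ring
end

section
/- Fix c ∈ [q] and families of subsets S₁(w), S₂(w) ⊆ [q] for w ∈ W satisfying: S₂(u) ⊊ S₁(u) with |S₁(u)| − |S₂(u)| = 1; S₂(w) is nonempty for every w ∈ W; S₂(w) = S₁(w) for every w ≠ u; and |S₂(u)| > 1. Let b ∈ S₂(u) be arbitrary, and define S₁°(u) = S₁(u) \ {b}, S₂°(u) = S₂(u) \ {b}, and S₁°(w) = S₁(w), S₂°(w) = S₂(w) for all w ≠ u. Then the modified families again satisfy all the constraints above, and, writing 𝒞ᵢ = ∏_{w∈W} Sᵢ(w) and 𝒞ᵢ° = ∏_{w∈W} Sᵢ°(w), one has ∑_{c'∈[q]} ν(c') · ( min_{τ∈𝒞₂°} f_{c,c'}(τ) − min_{τ∈𝒞₁°} f_{c,c'}(τ) ) ≥ ∑_{c'∈[q]} ν(c') · ( min_{τ∈𝒞₂} f_{c,c'}(τ) − min_{τ∈𝒞₁} f_{c,c'}(τ) ). 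-/
open Finset

lemma minOver_union {q : ℕ} {W : Type*} [Fintype W]
    (g : (W → Fin q) → ℝ) (C D : Set (W → Fin q))
    (hC : C.Nonempty) (hD : D.Nonempty) :
    minOver (C ∪ D) g = min (minOver C g) (minOver D g) := by
  unfold minOver
  rw [Set.image_union]
  exact csInf_union ((C.toFinite.image g).bddBelow) (hC.image g)
    ((D.toFinite.image g).bddBelow) (hD.image g)

lemma minOver_mono {q : ℕ} {W : Type*} [Fintype W]
    (g : (W → Fin q) → ℝ) (C D : Set (W → Fin q))
    (hC : C.Nonempty) (hCD : C ⊆ D) :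
    minOver D g ≤ minOver C g :=
  csInf_le_csInf ((D.toFinite.image g).bddBelow) (hC.image g)
    (Set.image_mono (f := g) hCD)

lemma key_ineq {q : ℕ} {W : Type*} [Fintype W]
    (g : (W → Fin q) → ℝ) (C₁ C₂ B : Set (W → Fin q))
    (h21 : C₂ ⊆ C₁) (h2 : C₂.Nonempty) (hB : B.Nonempty) :
    minOver C₂ g - minOver C₁ g ≥ minOver (C₂ ∪ B) g - minOver (C₁ ∪ B) g := by
  have h1 : C₁.Nonempty := h2.mono h21
  rw [minOver_union g C₂ B h2 hB, minOver_union g C₁ B h1 hB]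
  have hle : minOver C₁ g ≤ minOver C₂ g := minOver_mono g C₂ C₁ h2 h21
  set x := minOver C₂ g
  set y := minOver C₁ g
  set m := minOver B g
  rcases le_total y m with h | h
  · have : min y m = y := min_eq_left h
    rw [this]
    have := min_le_left x m
    linarith
  · have hy : min y m = m := min_eq_right h
    have hx : min x m = m := min_eq_right (le_trans h hle)
    rw [hy, hx]
    linarith

/-- **Claim 17 of the paper.** Removing an arbitrary element `b ∈ S₂(u)` from both
`S₁(u)` and `S₂(u)` preserves all constraints of the optimization problem and does
not decrease the objective `∑_{c'} ν(c')(min_{𝒞₂} f_{c,c'} − min_{𝒞₁} f_{c,c'})`. -/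
theorem remove_element_optimal (q : ℕ) (hq : 1 ≤ q) (W : Type*) [Fintype W] [Nonempty W]
    [DecidableEq W] (u : W)
    (ν : Fin q → ℝ) (hν0 : ∀ c', 0 ≤ ν c') (hν1 : ∑ c', ν c' = 1)
    (f : Fin q → Fin q → (W → Fin q) → ℝ)
    (hf : ∀ c c' τ, f c c' τ ∈ Set.Icc (0 : ℝ) 1)
    (c : Fin q) (S₁ S₂ : W → Finset (Fin q))
    (hsub : S₂ u ⊂ S₁ u) (hcard : (S₁ u).card = (S₂ u).card + 1)
    (hne : ∀ w, (S₂ w).Nonempty)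
    (heq : ∀ w, w ≠ u → S₂ w = S₁ w)
    (hbig : 1 < (S₂ u).card)
    (b : Fin q) (hb : b ∈ S₂ u) :
    -- the modified families `S₁°, S₂°` again satisfy all the constraints:
    ((S₂ u \ {b}) ⊂ (S₁ u \ {b}) ∧
      (S₁ u \ {b}).card = (S₂ u \ {b}).card + 1 ∧
      (∀ w, (if w = u then S₂ u \ {b} else S₂ w).Nonempty) ∧
      (∀ w, w ≠ u →
        (if w = u then S₂ u \ {b} else S₂ w) = (if w = u then S₁ u \ {b} else S₁ w))) ∧
    -- and the objective does not decrease: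
    ∑ c', ν c' *
        (minOver {τ : W → Fin q | ∀ w, τ w ∈ (if w = u then S₂ u \ {b} else S₂ w)} (f c c')
          - minOver {τ : W → Fin q | ∀ w, τ w ∈ (if w = u then S₁ u \ {b} else S₁ w)} (f c c'))
      ≥ ∑ c', ν c' *
        (minOver {τ : W → Fin q | ∀ w, τ w ∈ S₂ w} (f c c')
          - minOver {τ : W → Fin q | ∀ w, τ w ∈ S₁ w} (f c c')) := by
  have hb1 : b ∈ S₁ u := hsub.subset hb
  have hcard2 : (S₂ u \ {b}).card = (S₂ u).card - 1 := by
    rw [Finset.card_sdiff_of_subset (Finset.singleton_subset_iff.2 hb), Finset.card_singleton]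
  have hcard1 : (S₁ u \ {b}).card = (S₁ u).card - 1 := by
    rw [Finset.card_sdiff_of_subset (Finset.singleton_subset_iff.2 hb1), Finset.card_singleton]
  have hne2b : (S₂ u \ {b}).Nonempty := by
    rw [← Finset.card_pos, hcard2]; omega
  have hsub' : S₂ u \ {b} ⊆ S₁ u \ {b} :=
    Finset.sdiff_subset_sdiff hsub.subset (le_refl _)
  have hcard' : (S₁ u \ {b}).card = (S₂ u \ {b}).card + 1 := by
    rw [hcard1, hcard2, hcard]; omega
  refine ⟨⟨?_, hcard', ?_, ?_⟩, ?_⟩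
  · refine Finset.ssubset_iff_subset_ne.2 ⟨hsub', ?_⟩
    intro h
    rw [h] at hcard'
    omega
  · intro w
    by_cases hw : w = u
    · subst hw; simpa using hne2b
    · simpa [hw] using hne w
  · intro w hw
    simp [hw, heq w hw]
  · -- objective
    set B : Set (W → Fin q) := {τ | τ u = b ∧ ∀ w, τ w ∈ S₂ w} with hB
    have hBne : B.Nonempty := by
      refine ⟨Function.update (fun w => (hne w).choose) u b, ?_, ?_⟩
      · simp [Function.update]
      · intro w
        by_cases hw : w = u
        · subst hw; simpa using hb
        · simpa [Function.update, hw] using (hne w).choose_spec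
    have hC2 : {τ : W → Fin q | ∀ w, τ w ∈ S₂ w} =
        {τ : W → Fin q | ∀ w, τ w ∈ (if w = u then S₂ u \ {b} else S₂ w)} ∪ B := by
      ext τ
      simp only [Set.mem_setOf_eq, Set.mem_union, hB]
      constructor
      · intro h
        by_cases hτ : τ u = b
        · exact Or.inr ⟨hτ, h⟩
        · refine Or.inl fun w => ?_
          by_cases hw : w = u
          · subst hw; simp [Finset.mem_sdiff, h w, hτ]
          · simpa [hw] using h w
      · rintro (h | ⟨h1, h2⟩)
        · intro w
          have := h w
          by_cases hw : w = u
          · subst hw; rw [if_pos rfl, Finset.mem_sdiff] at this; exact this.1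
          · simpa [hw] using this
        · exact h2
    have hC1 : {τ : W → Fin q | ∀ w, τ w ∈ S₁ w} =
        {τ : W → Fin q | ∀ w, τ w ∈ (if w = u then S₁ u \ {b} else S₁ w)} ∪ B := by
      ext τ
      simp only [Set.mem_setOf_eq, Set.mem_union, hB]
      constructor
      · intro h
        by_cases hτ : τ u = b
        · refine Or.inr ⟨hτ, fun w => ?_⟩
          by_cases hw : w = u
          · subst hw; rw [hτ]; exact hb
          · rw [heq w hw]; exact h w
        · refine Or.inl fun w => ?_
          by_cases hw : w = u
          · subst hw; simp [Finset.mem_sdiff, h w, hτ]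
          · simpa [hw] using h w
      · rintro (h | ⟨h1, h2⟩)
        · intro w
          have := h w
          by_cases hw : w = u
          · subst hw; rw [if_pos rfl, Finset.mem_sdiff] at this; exact this.1
          · simpa [hw] using this
        · intro w
          by_cases hw : w = u
          · subst hw; rw [h1]; exact hb1
          · rw [← heq w hw]; exact h2 w
    rw [hC1, hC2]
    apply Finset.sum_le_sum
    intro c' _
    apply mul_le_mul_of_nonneg_left _ (hν0 c')
    apply key_ineq
    · intro τ hτ w
      have := hτ w
      by_cases hw : w = u
      · subst hw
        rw [if_pos rfl, Finset.mem_sdiff] at this ⊢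
        exact ⟨hsub.subset this.1, this.2⟩
      · simp only [if_neg hw] at this ⊢
        rw [← heq w hw]; exact this
    · have hne' : ∀ w, (if w = u then S₂ u \ {b} else S₂ w).Nonempty := by
        intro w
        by_cases hw : w = u
        · subst hw; simpa using hne2b
        · simpa [hw] using hne w
      exact ⟨fun w => (hne' w).choose, fun w => (hne' w).choose_spec⟩
    · exact hBne
end

section
/- Let n ≥ 1 and Δ ≥ 1 be integers, let T ≥ 0 and C ≥ 0 be real numbers, and let ℓ ≥ 1 be an integer. Then ∑_{s=0}^{ℓ−1} C(ℓ−1, s) · Δ^s · e^{−nT} · ( ∑_{m=ℓ}^{∞} ((nT)^m / m!) · C(m, ℓ) ) · (1/n)^ℓ · (2C/Δ)^s ≤ ( T·e·(1 + 2C) / ℓ )^ℓ, where C(·,·) denotes the binomial coefficient and e is Euler's number. -/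
/-!
Since `∑_{m ≥ ℓ} x^m/m! · C(m, ℓ) = x^ℓ/ℓ! · e^x`, the exponentials and the powers of `n` and `Δ`
cancel, and the binomial theorem leaves at most `(1 + 2C)^ℓ · T^ℓ/ℓ!`. Stirling's crude bound
`ℓ^ℓ/ℓ! ≤ e^ℓ` finishes.
-/

open Finset Nat

theorem hasSum_pow_div_factorial_mul_choose (x : ℝ) (ℓ : ℕ) :
    HasSum (fun m : ℕ => if ℓ ≤ m then x ^ m / m ! * (m.choose ℓ : ℝ) else 0)
      (x ^ ℓ / ℓ ! * Real.exp x) := by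
  rw [← hasSum_nat_add_iff' ℓ, sum_eq_zero fun i hi => if_neg (by simpa using hi), sub_zero]
  have hshift (k : ℕ) :
      x ^ (k + ℓ) / (k + ℓ)! * ((k + ℓ).choose ℓ : ℝ) = x ^ ℓ / ℓ ! * (x ^ k / k !) := by
    have hchoose : ((k + ℓ).choose ℓ : ℝ) ≠ 0 :=
      cast_ne_zero.2 (choose_pos (le_add_left ℓ k)).ne'
    rw [← add_choose_mul_factorial_mul_factorial k ℓ]
    push_cast
    field_simp
    ring
  simpa [hshift, Real.exp_eq_exp_ℝ] using
    (NormedSpace.expSeries_div_hasSum_exp x).mul_left (x ^ ℓ / ℓ !)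

theorem sum_range_choose_pred_mul_pow_le {y : ℝ} (hy : 0 ≤ y) (ℓ : ℕ) :
    ∑ s ∈ range ℓ, ((ℓ - 1).choose s : ℝ) * y ^ s ≤ (1 + y) ^ ℓ := calc
  _ ≤ ∑ s ∈ range ℓ, (ℓ.choose s : ℝ) * y ^ s := by
    gcongr
    exact sub_le ℓ 1
  _ ≤ ∑ s ∈ range (ℓ + 1), (ℓ.choose s : ℝ) * y ^ s :=
    sum_le_sum_of_subset_of_nonneg (range_subset_range.2 (le_succ ℓ)) fun _ _ _ => by positivity
  _ = (1 + y) ^ ℓ := by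
    rw [add_comm (1 : ℝ), add_pow]
    simp [mul_comm]

theorem pow_div_factorial_le_mul_exp_one_div_pow {T : ℝ} (hT : 0 ≤ T) (ℓ : ℕ) :
    T ^ ℓ / ℓ ! ≤ (T * Real.exp 1 / ℓ) ^ ℓ := by
  rcases ℓ.eq_zero_or_pos with rfl | hℓ
  · simp
  have hexp := Real.pow_div_factorial_le_exp (ℓ : ℝ) (cast_nonneg ℓ) ℓ
  rw [div_le_iff₀ (by positivity), ← Real.exp_one_pow] at hexp
  rw [div_pow, mul_pow, div_le_div_iff₀ (by positivity) (by positivity), mul_assoc]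
  gcongr

theorem pow_mul_div_pow_le {a b : ℝ} (ha : 0 ≤ a) (hb : 0 ≤ b) (k : ℕ) :
    a ^ k * (b / a) ^ k ≤ b ^ k := by
  rw [← mul_pow]
  gcongr
  rw [mul_div_left_comm]
  exact mul_le_of_le_one_right hb mul_inv_le_one

theorem dependency_path_prob_bound_general (n Δ : ℕ)
    (T C : ℝ) (hT : 0 ≤ T) (hC : 0 ≤ C) (ℓ : ℕ) :
    ∑ s ∈ Finset.range ℓ,
        ((ℓ - 1).choose s : ℝ) * (Δ : ℝ) ^ s * Real.exp (-((n : ℝ) * T)) *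
          (∑' m : ℕ, if ℓ ≤ m then ((n : ℝ) * T) ^ m / (Nat.factorial m) * (m.choose ℓ : ℝ)
            else 0) *
          (1 / (n : ℝ)) ^ ℓ * (2 * C / (Δ : ℝ)) ^ s
      ≤ (T * Real.exp 1 * (1 + 2 * C) / (ℓ : ℝ)) ^ ℓ := by
  rw [(hasSum_pow_div_factorial_mul_choose _ ℓ).tsum_eq]
  have hterm : ∀ s ∈ range ℓ,
      ((ℓ - 1).choose s : ℝ) * (Δ : ℝ) ^ s * Real.exp (-((n : ℝ) * T)) *
          (((n : ℝ) * T) ^ ℓ / ℓ ! * Real.exp ((n : ℝ) * T)) * (1 / (n : ℝ)) ^ ℓ *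
          (2 * C / (Δ : ℝ)) ^ s
        ≤ ((ℓ - 1).choose s : ℝ) * (2 * C) ^ s * (T ^ ℓ / ℓ !) := fun s _ => calc
    _ = ((ℓ - 1).choose s : ℝ) * ((Δ : ℝ) ^ s * (2 * C / Δ) ^ s) *
          (((n : ℝ) ^ ℓ * (T / n) ^ ℓ) / ℓ !) *
          (Real.exp (-((n : ℝ) * T)) * Real.exp ((n : ℝ) * T)) := by ring
    _ ≤ _ := by
      rw [← Real.exp_add, neg_add_cancel, Real.exp_zero, mul_one]
      gcongr
      · exact pow_mul_div_pow_le (cast_nonneg Δ) (by positivity) s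
      · exact pow_mul_div_pow_le (cast_nonneg n) hT ℓ
  calc _ ≤ ∑ s ∈ range ℓ, ((ℓ - 1).choose s : ℝ) * (2 * C) ^ s * (T ^ ℓ / ℓ !) :=
        sum_le_sum hterm
    _ = (∑ s ∈ range ℓ, ((ℓ - 1).choose s : ℝ) * (2 * C) ^ s) * (T ^ ℓ / ℓ !) :=
        (sum_mul ..).symm
    _ ≤ (1 + 2 * C) ^ ℓ * (T * Real.exp 1 / ℓ) ^ ℓ := by
        gcongr
        · exact sum_range_choose_pred_mul_pow_le (by positivity) ℓ
        · exact pow_div_factorial_le_mul_exp_one_div_pow hT ℓ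
    _ = _ := by rw [← mul_pow]; ring

/-- **The key estimate in the dependency-path analysis.** For integers `n, Δ ≥ 1`,
reals `T, C ≥ 0`, and an integer `ℓ ≥ 1`,
`∑_{s=0}^{ℓ−1} C(ℓ−1, s) Δ^s e^{−nT} (∑_{m=ℓ}^{∞} ((nT)^m/m!) C(m, ℓ)) (1/n)^ℓ (2C/Δ)^s
  ≤ (T·e·(1 + 2C)/ℓ)^ℓ`. -/
theorem dependency_path_prob_bound (n Δ : ℕ) (hn : 1 ≤ n) (hΔ : 1 ≤ Δ)
    (T C : ℝ) (hT : 0 ≤ T) (hC : 0 ≤ C) (ℓ : ℕ) (hℓ : 1 ≤ ℓ) :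
    ∑ s ∈ Finset.range ℓ,
        ((ℓ - 1).choose s : ℝ) * (Δ : ℝ) ^ s * Real.exp (-((n : ℝ) * T)) *
          (∑' m : ℕ, if ℓ ≤ m then ((n : ℝ) * T) ^ m / (Nat.factorial m) * (m.choose ℓ : ℝ)
            else 0) *
          (1 / (n : ℝ)) ^ ℓ * (2 * C / (Δ : ℝ)) ^ s
      ≤ (T * Real.exp 1 * (1 + 2 * C) / (ℓ : ℝ)) ^ ℓ :=
  dependency_path_prob_bound_general n Δ T C hT hC ℓ
end

section
/- Let β ∈ ℝ, let W be a nonempty finite index set, and for c, c' ∈ {−1, +1} define the Ising Metropolis filter f_{c,c'} : {−1,+1}^W → [0,1] by f_{c,c'}(τ) = exp( min{ 0, β·(c' − c)·∑_{w∈W} τ_w } ). Then for every u ∈ W and every a, b, c ∈ {−1, +1}, the average over a uniformly random c' ∈ {−1,+1} satisfies (1/2) ∑_{c'∈{−1,+1}} δ_{u,a,b} f_{c,c'} ≤ 1 − e^{−2|β|}. -/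
/-- `deltaSpin f u a b` is the maximum of `|f σ - f τ|` over all pairs of spin
configurations `σ, τ : W → ℝ` taking values in `{-1, +1}` with `σ u = a`, `τ u = b`,
and `σ w = τ w` for all `w ≠ u`. -/
noncomputable def deltaSpin {W : Type*} (f : (W → ℝ) → ℝ) (u : W) (a b : ℝ) : ℝ :=
  sSup {x : ℝ | ∃ σ τ : W → ℝ,
    (∀ w, σ w = -1 ∨ σ w = 1) ∧ (∀ w, τ w = -1 ∨ τ w = 1) ∧
    σ u = a ∧ τ u = b ∧ (∀ w, w ≠ u → σ w = τ w) ∧ x = |f σ - f τ|}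

lemma deltaSpin_le {W : Type*} {f : (W → ℝ) → ℝ} {u : W} {a b B : ℝ}
    (hB : 0 ≤ B)
    (h : ∀ σ τ : W → ℝ, (∀ w, σ w = -1 ∨ σ w = 1) → (∀ w, τ w = -1 ∨ τ w = 1) →
      σ u = a → τ u = b → (∀ w, w ≠ u → σ w = τ w) → |f σ - f τ| ≤ B) :
    deltaSpin f u a b ≤ B := by
  apply Real.sSup_le _ hB
  rintro x ⟨σ, τ, hσ, hτ, hσu, hτu, heq, rfl⟩
  exact h σ τ hσ hτ hσu hτu heq

lemma exp_diff_bound {m m' D : ℝ} (hm : m ≤ 0) (hm' : m' ≤ 0) (h : |m - m'| ≤ D) :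
    |Real.exp m - Real.exp m'| ≤ 1 - Real.exp (-D) := by
  wlog hmm : m' ≤ m generalizing m m'
  · rw [abs_sub_comm] at h ⊢
    exact this hm' hm h (le_of_not_ge hmm)
  rw [abs_of_nonneg (sub_nonneg.mpr (Real.exp_le_exp.mpr hmm))]
  have h1 : Real.exp m ≤ 1 := Real.exp_le_one_iff.mpr hm
  have h2 : m - D ≤ m' := by
    have := abs_le.mp h
    linarith [this.1]
  have h3 : Real.exp m * Real.exp (-D) ≤ Real.exp m' := by
    rw [← Real.exp_add]
    exact Real.exp_le_exp.mpr (by linarith)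
  have h5 : Real.exp (-D) ≤ 1 := by
    apply Real.exp_le_one_iff.mpr
    have : (0:ℝ) ≤ |m - m'| := abs_nonneg _
    linarith
  nlinarith [mul_nonneg (sub_nonneg.mpr h1) (sub_nonneg.mpr h5)]

lemma ising_pair_bound (β : ℝ) {W : Type*} [Fintype W] {u : W} {a b : ℝ} (k : ℝ)
    (hab : |a - b| ≤ 2) (hk : |k| ≤ 2 * |β|)
    (σ τ : W → ℝ) (hσu : σ u = a) (hτu : τ u = b) (heq : ∀ w, w ≠ u → σ w = τ w) :
    |Real.exp (min 0 (k * ∑ w, σ w)) - Real.exp (min 0 (k * ∑ w, τ w))|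
      ≤ 1 - Real.exp (-(4 * |β|)) := by
  apply exp_diff_bound (min_le_left _ _) (min_le_left _ _)
  have hsum : (∑ w, σ w) - (∑ w, τ w) = a - b := by
    rw [← Finset.sum_sub_distrib]
    rw [Finset.sum_eq_single_of_mem u (Finset.mem_univ u)
      (fun w _ hw => by rw [heq w hw]; ring)]
    rw [hσu, hτu]
  calc |min 0 (k * ∑ w, σ w) - min 0 (k * ∑ w, τ w)|
      ≤ |k * ∑ w, σ w - k * ∑ w, τ w| := by
        simpa using abs_min_sub_min_le_max 0 (k * ∑ w, σ w) 0 (k * ∑ w, τ w)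
    _ = |k| * |a - b| := by rw [← mul_sub, abs_mul, hsum]
    _ ≤ 4 * |β| := by nlinarith [abs_nonneg k, abs_nonneg (a - b)]

/-- **Lipschitz condition for the Ising model.** For the Ising Metropolis filter
`f_{c,c'}(τ) = exp(min{0, β (c'−c) ∑_w τ_w})`, for every `u ∈ W` and
`a, b, c ∈ {−1, +1}`, the average over a uniform `c' ∈ {−1, +1}` satisfies
`(1/2) ∑_{c'} δ_{u,a,b} f_{c,c'} ≤ 1 − e^{−2|β|}`. -/
theorem ising_lipschitz (β : ℝ) (W : Type*) [Fintype W] [Nonempty W] (u : W)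
    (a b c : ℝ) (ha : a = -1 ∨ a = 1) (hb : b = -1 ∨ b = 1) (hc : c = -1 ∨ c = 1) :
    (1 / 2) *
        ∑ c' ∈ ({-1, 1} : Finset ℝ),
          deltaSpin (fun τ : W → ℝ =>
            Real.exp (min 0 (β * (c' - c) * ∑ w, τ w))) u a b
      ≤ 1 - Real.exp (-(2 * |β|)) := by
  have hab : |a - b| ≤ 2 := by
    rcases ha with rfl | rfl <;> rcases hb with rfl | rfl <;> norm_num
  have hexp1 : (0:ℝ) ≤ 1 - Real.exp (-(4 * |β|)) := by
    have : Real.exp (-(4 * |β|)) ≤ 1 := by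
      apply Real.exp_le_one_iff.mpr
      have := abs_nonneg β
      linarith
    linarith
  -- bound for the c' = c term
  have hzero : deltaSpin (fun τ : W → ℝ =>
      Real.exp (min 0 (β * (c - c) * ∑ w, τ w))) u a b ≤ 0 := by
    apply deltaSpin_le le_rfl
    intro σ τ _ _ _ _ _
    simp
  -- bound for the c' ≠ c term
  have hbig : ∀ c' : ℝ, |c' - c| ≤ 2 →
      deltaSpin (fun τ : W → ℝ =>
        Real.exp (min 0 (β * (c' - c) * ∑ w, τ w))) u a b
        ≤ 1 - Real.exp (-(4 * |β|)) := by
    intro c' hc'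
    apply deltaSpin_le hexp1
    intro σ τ _ _ hσu hτu heq
    apply ising_pair_bound β (β * (c' - c)) hab _ σ τ hσu hτu heq
    rw [abs_mul]
    nlinarith [abs_nonneg β, abs_nonneg (c' - c)]
  rw [Finset.sum_pair (by norm_num : (-1:ℝ) ≠ 1)]
  have hsq : Real.exp (-(4 * |β|)) = Real.exp (-(2 * |β|)) * Real.exp (-(2 * |β|)) := by
    rw [← Real.exp_add]; ring_nf
  have key : deltaSpin (fun τ : W → ℝ =>
        Real.exp (min 0 (β * (-1 - c) * ∑ w, τ w))) u a b
      + deltaSpin (fun τ : W → ℝ =>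
        Real.exp (min 0 (β * (1 - c) * ∑ w, τ w))) u a b
      ≤ 1 - Real.exp (-(4 * |β|)) := by
    rcases hc with rfl | rfl
    · have h1 := hzero
      have h2 := hbig 1 (by norm_num)
      norm_num at h1 h2 ⊢
      linarith
    · have h1 := hbig (-1) (by norm_num)
      have h2 := hzero
      norm_num at h1 h2 ⊢
      linarith
  have hpos : (0:ℝ) < Real.exp (-(2 * |β|)) := Real.exp_pos _
  nlinarith [sq_nonneg (1 - Real.exp (-(2 * |β|)))]
end
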